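/- arXiv:2011.08364 — 6 statements merged into one kernel-verified Lean document; each statement's English description precedes it below -/
import Mathlib

section
/- Let W be an n×n matrix with nonnegative real entries such that for every i, the i-th row sum of W equals the i-th column sum of W, and each of these common values u_i is an integer. Then there exists an n×n matrix W* with nonnegative integer entries such that W*_{ij} = 0 whenever W_{ij} = 0, and for every i, the i-th row sum of W* and the i-th column sum of W* both equal u_i. -/
open scoped NNReal

open Finset

private def fiberEquiv {n : ℕ} (u : Fin n → ℕ) (j : Fin n) :
    {y : Σ i : Fin n, Fin (u i) // y.1 = j} ≃ Fin (u j) where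
  toFun y := Fin.cast (congrArg u y.2) y.1.2
  invFun a := ⟨⟨j, a⟩, rfl⟩
  left_inv := by rintro ⟨⟨k, a⟩, rfl⟩; rfl
  right_inv a := rfl

private def sigmaSubtypeEquiv {n : ℕ} {u : Fin n → ℕ} (p : (Σ i : Fin n, Fin (u i)) → Prop) :
    (Σ i : Fin n, {a : Fin (u i) // p ⟨i, a⟩}) ≃ {x : Σ i : Fin n, Fin (u i) // p x} where
  toFun x := ⟨⟨x.1, x.2.1⟩, x.2.2⟩
  invFun x := ⟨x.1.1, ⟨x.1.2, x.2⟩⟩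
  left_inv := by rintro ⟨i, a, h⟩; rfl
  right_inv := by rintro ⟨⟨i, a⟩, h⟩; rfl

theorem integer_balancing {n : ℕ} (W : Fin n → Fin n → ℝ≥0) (u : Fin n → ℕ)
    (hbal : ∀ i, ∑ j, W i j = ∑ k, W k i)
    (hint : ∀ i, ∑ j, W i j = (u i : ℝ≥0)) :
    ∃ Wstar : Fin n → Fin n → ℕ,
      (∀ i j, W i j = 0 → Wstar i j = 0) ∧
      (∀ i, ∑ j, Wstar i j = u i) ∧
      (∀ i, ∑ k, Wstar k i = u i) := by
  classical
  set V := (Σ i : Fin n, Fin (u i)) with hV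
  -- cardinality of a set of fibers
  have hfib : ∀ S : Finset (Fin n),
      (univ.filter fun y : V => y.1 ∈ S).card = ∑ j ∈ S, u j := by
    intro S
    rw [← Fintype.card_subtype]
    rw [Fintype.card_congr ((sigmaSubtypeEquiv (fun y : V => y.1 ∈ S)).symm)]
    rw [Fintype.card_sigma]
    have : ∀ i : Fin n, Fintype.card {a : Fin (u i) // i ∈ S} =
        if i ∈ S then u i else 0 := by
      intro i
      by_cases h : i ∈ S
      · simp only [h, if_true]
        rw [Fintype.card_subtype]
        simp
      · simp [h]
    simp only [this]
    simp [Finset.sum_ite_mem]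
  -- the key Hall-type inequality
  have key : ∀ A T : Finset (Fin n), (∀ i ∈ A, ∀ j, W i j ≠ 0 → j ∈ T) →
      ∑ i ∈ A, u i ≤ ∑ j ∈ T, u j := by
    intro A T h
    have : ((∑ i ∈ A, u i : ℕ) : ℝ≥0) ≤ ((∑ j ∈ T, u j : ℕ) : ℝ≥0) := by
      push_cast
      calc ∑ i ∈ A, (u i : ℝ≥0) = ∑ i ∈ A, ∑ j, W i j := by
            exact Finset.sum_congr rfl fun i _ => (hint i).symm
        _ = ∑ i ∈ A, ∑ j ∈ T, W i j := by
            refine Finset.sum_congr rfl fun i hi => ?_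
            symm
            refine Finset.sum_subset (Finset.subset_univ T) fun j _ hj => ?_
            by_contra hne
            exact hj (h i hi j hne)
        _ ≤ ∑ i, ∑ j ∈ T, W i j :=
            Finset.sum_le_sum_of_subset (Finset.subset_univ A)
        _ = ∑ j ∈ T, ∑ i, W i j := Finset.sum_comm
        _ = ∑ j ∈ T, (u j : ℝ≥0) := by
            refine Finset.sum_congr rfl fun j _ => ?_
            rw [← hbal j, hint j]
    exact_mod_cast this
  -- Hall's theorem
  set t : V → Finset V := fun x => univ.filter fun y : V => W x.1 y.1 ≠ 0 with ht
  have hall : ∀ s : Finset V, s.card ≤ (s.biUnion t).card := by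
    intro s
    set A : Finset (Fin n) := s.image Sigma.fst with hA
    set T : Finset (Fin n) := A.biUnion fun i => univ.filter fun j => W i j ≠ 0 with hT
    have h1 : s.card ≤ ∑ i ∈ A, u i := by
      rw [← hfib A]
      apply Finset.card_le_card
      intro x hx
      simp only [Finset.mem_filter, Finset.mem_univ, true_and, hA]
      exact Finset.mem_image_of_mem _ hx
    have h2 : s.biUnion t = univ.filter fun y : V => y.1 ∈ T := by
      ext y
      simp only [Finset.mem_biUnion, ht, Finset.mem_filter, Finset.mem_univ, true_and, hT,
        hA, Finset.mem_image]
      constructor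
      · rintro ⟨x, hx, hW⟩
        exact ⟨x.1, ⟨x, hx, rfl⟩, hW⟩
      · rintro ⟨i, ⟨x, hx, rfl⟩, hW⟩
        exact ⟨x, hx, hW⟩
    have h3 : (∀ i ∈ A, ∀ j, W i j ≠ 0 → j ∈ T) := by
      intro i hi j hj
      simp only [hT, Finset.mem_biUnion, Finset.mem_filter, Finset.mem_univ, true_and]
      exact ⟨i, hi, hj⟩
    calc s.card ≤ ∑ i ∈ A, u i := h1
      _ ≤ ∑ j ∈ T, u j := key A T h3
      _ = (s.biUnion t).card := by rw [h2, hfib T]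
  obtain ⟨f, hfinj, hft⟩ := (Finset.all_card_le_biUnion_card_iff_exists_injective t).mp hall
  have hfbij : Function.Bijective f := Finite.injective_iff_bijective.mp hfinj
  set e : V ≃ V := Equiv.ofBijective f hfbij with he
  refine ⟨fun i j => Fintype.card {a : Fin (u i) // (f ⟨i, a⟩).1 = j}, ?_, ?_, ?_⟩
  · intro i j hW
    rw [Fintype.card_eq_zero_iff]
    constructor
    rintro ⟨a, ha⟩
    have := hft ⟨i, a⟩
    rw [ht] at this
    simp only [Finset.mem_filter] at this
    exact this.2 (ha ▸ hW)
  · intro i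
    rw [← Fintype.card_sigma,
      Fintype.card_congr (Equiv.sigmaFiberEquiv fun a : Fin (u i) => (f ⟨i, a⟩).1)]
    simp
  · intro j
    rw [← Fintype.card_sigma,
      Fintype.card_congr (sigmaSubtypeEquiv fun x : V => (f x).1 = j),
      Fintype.card_congr (e.subtypeEquiv (fun x => Iff.rfl) :
        {x : V // (f x).1 = j} ≃ {y : V // y.1 = j}),
      Fintype.card_congr (fiberEquiv u j), Fintype.card_fin]
end

section
/- Let W : Fin n → Fin n → ℝ≥0 have equal integer row and column sums at each index. Then the following are equivalent: (1) every entry of W is an integer; (2) W has no non-integer entry lying on a completely decimal cycle; moreover, every non-integer entry of W lies on some completely decimal cycle, i.e., if W_{i,j} is not an integer then there exist pairwise-distinct α_1,...,α_p and pairwise-distinct β_1,...,β_p with (α_1, β_1) = (i, j) and all entries W_{α_k, β_k}, W_{α_{k+1}, β_k} (α_{p+1} = α_1) non-integers. -/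
open scoped NNReal

def IsIntNN (x : ℝ≥0) : Prop := ∃ m : ℕ, x = (m : ℝ≥0)

/-- There is a completely decimal cycle passing through the entry `(i, j)`. -/
def DecimalCycleThrough {n : ℕ} (W : Fin n → Fin n → ℝ≥0) (i j : Fin n) : Prop :=
  ∃ (p : ℕ) (α β : Fin (p + 1) → Fin n),
    Function.Injective α ∧ Function.Injective β ∧
    α 0 = i ∧ β 0 = j ∧
    ∀ k : Fin (p + 1),
      ¬ IsIntNN (W (α k) (β k)) ∧ ¬ IsIntNN (W (α (k + 1)) (β k))

/-!
Join row `a` to column `b` whenever `W a b` is not an integer, and delete the edge `(i, j)`.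
If column `j` still reaches row `i`, a path from `j` to `i` closed up by the entry `(i, j)` is a
completely decimal cycle. Otherwise let `S` and `T` be the rows and columns reachable from `j`:
every non-integer entry of a row in `S` lies in a column of `T`, and every non-integer entry of a
column in `T` other than `(i, j)` lies in a row of `S`. Comparing the column sums over `T` with
the row sums over `S` then exhibits `W i j` as a sum and difference of integers.
-/

open Finset Sum

theorem AddSubgroup.mem_of_cut {ι κ M : Type*} [Fintype ι] [Fintype κ] [DecidableEq ι]
    [DecidableEq κ] [AddCommGroup M] (Z : AddSubgroup M) {W : ι → κ → M}
    (hrow : ∀ a, ∑ b, W a b ∈ Z) (hcol : ∀ b, ∑ a, W a b ∈ Z) (S : Finset ι) (T : Finset κ)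
    {i : ι} {j : κ} (hi : i ∉ S) (hj : j ∈ T) (hST : ∀ a ∈ S, ∀ b ∉ T, W a b ∈ Z)
    (hTS : ∀ a ∉ S, ∀ b ∈ T, (a, b) ≠ (i, j) → W a b ∈ Z) :
    W i j ∈ Z := by
  have hflow : ∑ x ∈ Sᶜ ×ˢ T, W x.1 x.2 =
      (∑ b ∈ T, ∑ a, W a b - ∑ a ∈ S, ∑ b, W a b) + ∑ a ∈ S, ∑ b ∈ Tᶜ, W a b := by
    simp only [sum_product, ← sum_add_sum_compl S fun a => W a _,
      ← sum_add_sum_compl T (W _), sum_add_distrib]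
    rw [sum_comm (s := T) (t := S), sum_comm (s := T) (t := Sᶜ)]
    abel
  have hmem : ∑ x ∈ Sᶜ ×ˢ T, W x.1 x.2 ∈ Z := by
    rw [hflow]
    exact add_mem (sub_mem (sum_mem fun b _ => hcol b) (sum_mem fun a _ => hrow a))
      (sum_mem fun a ha => sum_mem fun b hb => hST a ha b (mem_compl.mp hb))
  have hij : (i, j) ∈ Sᶜ ×ˢ T := mem_product.mpr ⟨mem_compl.mpr hi, hj⟩
  rw [← add_sum_erase _ _ hij] at hmem
  refine (add_mem_cancel_right (sum_mem fun x hx => ?_)).mp hmem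
  obtain ⟨hne, hx⟩ := mem_erase.mp hx
  exact hTS x.1 (mem_compl.mp (mem_product.mp hx).1) x.2 (mem_product.mp hx).2 hne

namespace SimpleGraph

variable {α β : Type*} {R : α → β → Prop}

def bipartiteOfRel (R : α → β → Prop) : SimpleGraph (α ⊕ β) where
  Adj u v := match u, v with
    | inl a, inr b => R a b
    | inr b, inl a => R a b
    | _, _ => False
  symm := ⟨by rintro (a | b) (a' | b') h <;> exact h⟩
  loopless := ⟨by rintro (a | b) h <;> exact h⟩

@[simp]
theorem bipartiteOfRel_adj_inl_inr {a : α} {b : β} :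
    (bipartiteOfRel R).Adj (inl a) (inr b) ↔ R a b := Iff.rfl

@[simp]
theorem bipartiteOfRel_adj_inr_inl {a : α} {b : β} :
    (bipartiteOfRel R).Adj (inr b) (inl a) ↔ R a b := Iff.rfl

theorem bipartiteOfRel_adj_isLeft {u v : α ⊕ β} (h : (bipartiteOfRel R).Adj u v) :
    v.isLeft = !u.isLeft := by
  rcases u with a | b <;> rcases v with a' | b' <;> first | rfl | exact h.elim

theorem Walk.isLeft_getVert_bipartiteOfRel {b : β} {v : α ⊕ β}
    (w : (bipartiteOfRel R).Walk (inr b) v) {k : ℕ} (hk : k ≤ w.length) :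
    (w.getVert k).isLeft ↔ Odd k := by
  induction k with
  | zero => simp
  | succ k ih =>
    rw [bipartiteOfRel_adj_isLeft (w.adj_getVert_succ hk), Nat.odd_add_one, ← ih (by omega)]
    simp

theorem Walk.IsPath.exists_alternating_bipartiteOfRel {a : α} {b : β}
    {w : (bipartiteOfRel R).Walk (inr b) (inl a)} (hw : w.IsPath) :
    ∃ (p : ℕ) (f : Fin (p + 1) → α) (g : Fin (p + 1) → β),
      f.Injective ∧ g.Injective ∧ g 0 = b ∧ f (Fin.last p) = a ∧
      (∀ k, R (f k) (g k)) ∧ ∀ k : Fin p, R (f k.castSucc) (g k.succ) := by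
  obtain ⟨p, hp⟩ : Odd w.length := by
    simpa using (w.isLeft_getVert_bipartiteOfRel le_rfl).mp
  have hodd : ∀ k : Fin (p + 1), ∃ x, w.getVert (2 * k + 1) = inl x := fun k =>
    isLeft_iff.mp ((w.isLeft_getVert_bipartiteOfRel (by omega)).mpr (odd_two_mul_add_one _))
  have heven : ∀ k : Fin (p + 1), ∃ y, w.getVert (2 * k) = inr y := by
    intro k
    refine isRight_iff.mp (not_isLeft.mp fun h => ?_)
    exact Nat.not_odd_iff_even.mpr (even_two_mul _)
      ((w.isLeft_getVert_bipartiteOfRel (by omega)).mp h)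
  choose f hf using hodd
  choose g hg using heven
  refine ⟨p, f, g, fun k l hkl => ?_, fun k l hkl => ?_, ?_, ?_, fun k => ?_, fun k => ?_⟩
  · have := hw.getVert_injOn (show 2 * (k : ℕ) + 1 ∈ {i | i ≤ w.length} by simp; omega)
      (show 2 * (l : ℕ) + 1 ∈ {i | i ≤ w.length} by simp; omega) (by rw [hf, hf, hkl])
    omega
  · have := hw.getVert_injOn (show 2 * (k : ℕ) ∈ {i | i ≤ w.length} by simp; omega)
      (show 2 * (l : ℕ) ∈ {i | i ≤ w.length} by simp; omega) (by rw [hg, hg, hkl])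
    omega
  · simpa using (hg 0).symm
  · have := hf (Fin.last p)
    rw [Fin.val_last, ← hp, Walk.getVert_length] at this
    exact inl_injective this.symm
  · have := w.adj_getVert_succ (i := 2 * k) (by omega)
    rwa [hg, hf] at this
  · have := w.adj_getVert_succ (i := 2 * k + 1) (by omega)
    rwa [show 2 * (k : ℕ) + 1 = 2 * (k.castSucc : ℕ) + 1 from rfl, hf,
      show 2 * (k.castSucc : ℕ) + 1 + 1 = 2 * (k.succ : ℕ) by simp; ring, hg] at this

end SimpleGraph

open SimpleGraph

theorem isIntNN_iff_mem_range_intCast {x : ℝ≥0} :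
    IsIntNN x ↔ (x : ℝ) ∈ (Int.castAddHom ℝ).range := by
  constructor
  · rintro ⟨m, rfl⟩
    exact ⟨m, by simp⟩
  · rintro ⟨m, hm⟩
    have hm : (m : ℝ) = x := by simpa using hm
    have hm0 : 0 ≤ m := by exact_mod_cast hm ▸ x.coe_nonneg
    refine ⟨m.toNat, NNReal.coe_injective ?_⟩
    rw [NNReal.coe_natCast, ← hm]
    exact_mod_cast (Int.toNat_of_nonneg hm0).symm

abbrev decimalGraph {ι κ : Type*} (W : ι → κ → ℝ≥0) (i : ι) (j : κ) : SimpleGraph (ι ⊕ κ) :=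
  bipartiteOfRel fun a b => ¬ IsIntNN (W a b) ∧ (a, b) ≠ (i, j)

theorem isIntNN_of_not_reachable {ι κ : Type*} [Fintype ι] [Fintype κ] {W : ι → κ → ℝ≥0}
    (hrow : ∀ a, IsIntNN (∑ b, W a b)) (hcol : ∀ b, IsIntNN (∑ a, W a b)) {i : ι} {j : κ}
    (h : ¬ (decimalGraph W i j).Reachable (inr j) (inl i)) :
    IsIntNN (W i j) := by
  classical
  set G := decimalGraph W i j
  simp only [isIntNN_iff_mem_range_intCast, NNReal.coe_sum] at hrow hcol ⊢
  refine (Int.castAddHom ℝ).range.mem_of_cut hrow hcol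
    {a | G.Reachable (inr j) (inl a)} {b | G.Reachable (inr j) (inr b)}
    (by simpa using h) (by simp) (fun a ha b hb => ?_) (fun a ha b hb hab => ?_)
  all_goals
    simp only [Finset.mem_filter, Finset.mem_univ, true_and] at ha hb
    rw [← isIntNN_iff_mem_range_intCast]
    by_contra hN
  · have hab : (a, b) ≠ (i, j) := by rintro ⟨rfl, rfl⟩; exact h ha
    exact hb (ha.trans (Adj.reachable (by simpa using ⟨hN, hab⟩)))
  · exact ha (hb.trans (Adj.reachable (by simpa using ⟨hN, hab⟩)))

theorem decimalCycleThrough_of_reachable {n : ℕ} {W : Fin n → Fin n → ℝ≥0} {i j : Fin n}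
    (hij : ¬ IsIntNN (W i j)) (h : (decimalGraph W i j).Reachable (inr j) (inl i)) :
    DecimalCycleThrough W i j := by
  obtain ⟨w, hw, -⟩ := h.exists_path_of_dist
  obtain ⟨p, f, g, hf, hg, hg0, hfp, hfg, hfg'⟩ := hw.exists_alternating_bipartiteOfRel
  -- The path is `j, f 0, g 1, f 1, …, g p, f p = i`; shifting `f` by one index closes it into a
  -- cycle through the entry `(i, j)`.
  have hf0 : f (0 - 1) = i := by
    rwa [show (0 : Fin (p + 1)) - 1 = Fin.last p by rw [sub_eq_iff_eq_add, Fin.last_add_one]]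
  refine ⟨p, fun k => f (k - 1), g, hf.comp sub_left_injective, hg, hf0, hg0,
    fun k => ⟨?_, by simpa using (hfg k).1⟩⟩
  show ¬ IsIntNN (W (f (k - 1)) (g k))
  rcases Fin.eq_zero_or_eq_succ k with rfl | ⟨l, rfl⟩
  · rwa [hf0, hg0]
  · rw [show l.succ - 1 = l.castSucc by rw [sub_eq_iff_eq_add, Fin.coeSucc_eq_succ]]
    exact (hfg' l).1

theorem decimalCycleThrough_of_not_isIntNN {n : ℕ} {W : Fin n → Fin n → ℝ≥0}
    (hrow : ∀ a, IsIntNN (∑ b, W a b)) (hcol : ∀ b, IsIntNN (∑ a, W a b)) {i j : Fin n}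
    (hij : ¬ IsIntNN (W i j)) :
    DecimalCycleThrough W i j := by
  by_cases h : (decimalGraph W i j).Reachable (inr j) (inl i)
  · exact decimalCycleThrough_of_reachable hij h
  · exact absurd (isIntNN_of_not_reachable hrow hcol h) hij

theorem integer_iff_no_decimal_entry_on_cycle {n : ℕ} (W : Fin n → Fin n → ℝ≥0)
    (hbal : ∀ i, ∑ j, W i j = ∑ k, W k i)
    (hint : ∀ i, ∃ m : ℕ, ∑ j, W i j = (m : ℝ≥0)) :
    ((∀ i j, IsIntNN (W i j)) ↔
      ¬ ∃ i j, ¬ IsIntNN (W i j) ∧ DecimalCycleThrough W i j) ∧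
    (∀ i j, ¬ IsIntNN (W i j) → DecimalCycleThrough W i j) := by
  have hcycle : ∀ i j, ¬ IsIntNN (W i j) → DecimalCycleThrough W i j := fun i j =>
    decimalCycleThrough_of_not_isIntNN hint fun b => hbal b ▸ hint b
  refine ⟨⟨fun hall ⟨i, j, hij, _⟩ => hij (hall i j), fun h i j => ?_⟩, hcycle⟩
  by_contra hij
  exact h ⟨i, j, hij, hcycle i j hij⟩
end

section
/- Let W : Fin n → Fin n → ℝ≥0 have row sum i equal to column sum i, both equal to an integer u_i, for every i. Then there exists W* : Fin n → Fin n → ℕ with W*_{ij} ≤ ⌈W_{ij}⌉ and W*_{ij} ≥ ⌊W_{ij}⌋ for all i, j, such that every row sum and the corresponding column sum of W* both equal u_i. -/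
/-!
Among the real matrices with the prescribed margins lying entrywise between `⌊W⌋` and `⌈W⌉`,
take one with the fewest non-integer entries. Since the margins are integers, a row or column
containing a non-integer entry contains at least two, so the set `F` of non-integer cells has at
least as many elements as the rows plus columns it meets. A dimension count then yields a nonzero
matrix supported on `F` with zero margins, and moving along it until the first entry reaches an
end of its interval makes that entry an integer, contradicting minimality. The resulting integer
matrix lies between `⌊W⌋ ≥ 0` and `⌈W⌉`.
-/

open Finset Module

lemma exists_ne_fract_ne_zero_of_sum_eq_intCast {α : Type*} [Fintype α] [DecidableEq α]
    {f : α → ℝ} {m : ℤ} (hf : ∑ a, f a = m) {a₀ : α} (ha₀ : Int.fract (f a₀) ≠ 0) :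
    ∃ a ≠ a₀, Int.fract (f a) ≠ 0 := by
  by_contra! h
  have hint : ∀ a ∈ univ.erase a₀, f a = ⌊f a⌋ := fun a ha =>
    ((Int.floor_eq_self_iff_mem _).mpr (Int.fract_eq_zero_iff.mp (h a (ne_of_mem_erase ha)))).symm
  have : f a₀ = ((m - ∑ a ∈ univ.erase a₀, ⌊f a⌋ : ℤ) : ℝ) := by
    rw [← add_sum_erase _ _ (mem_univ a₀), sum_congr rfl hint] at hf
    push_cast
    linarith
  exact ha₀ (this ▸ Int.fract_intCast _)

lemma two_mul_card_image_le_card {α β : Type*} [DecidableEq β] {s : Finset α} {f : α → β}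
    (h : ∀ a ∈ s, ∃ b ∈ s, b ≠ a ∧ f b = f a) : 2 * #(s.image f) ≤ #s :=
  mul_card_image_le_card s 2 fun y hy => by
    obtain ⟨a, ha, rfl⟩ := mem_image.mp hy
    obtain ⟨b, hb, hba, hfb⟩ := h a ha
    exact one_lt_card.mpr ⟨a, mem_filter.mpr ⟨ha, rfl⟩, b, mem_filter.mpr ⟨hb, hfb⟩, hba.symm⟩

lemma exists_add_mul_mem_Icc_and_eq_endpoint {α : Type*} {S : Finset α} (hS : S.Nonempty)
    {a d lo hi : α → ℝ} (ha : ∀ p ∈ S, a p ∈ Set.Icc (lo p) (hi p)) (hd : ∀ p ∈ S, d p ≠ 0) :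
    ∃ t : ℝ, (∀ p ∈ S, a p + t * d p ∈ Set.Icc (lo p) (hi p)) ∧
      ∃ p ∈ S, a p + t * d p = lo p ∨ a p + t * d p = hi p := by
  -- the largest step along `d p` keeping the `p`-entry in `[lo p, hi p]`
  let τ p := if 0 < d p then (hi p - a p) / d p else (lo p - a p) / d p
  have hτ : ∀ p ∈ S, 0 ≤ τ p ∧ τ p * d p = if 0 < d p then hi p - a p else lo p - a p := by
    intro p hp
    obtain ⟨hlo, hhi⟩ := ha p hp
    rcases (hd p hp).lt_or_gt with hneg | hpos
    · simp only [τ, if_neg hneg.not_gt, div_mul_cancel₀ _ hneg.ne]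
      exact ⟨div_nonneg_of_nonpos (by linarith) hneg.le, trivial⟩
    · simp only [τ, if_pos hpos, div_mul_cancel₀ _ hpos.ne']
      exact ⟨div_nonneg (by linarith) hpos.le, trivial⟩
  obtain ⟨p₀, hp₀, hmin⟩ := S.exists_min_image τ hS
  refine ⟨τ p₀, fun p hp => ?_, p₀, hp₀, ?_⟩
  · obtain ⟨hlo, hhi⟩ := ha p hp
    have ht₀ := (hτ p₀ hp₀).1
    have hτp := (hτ p hp).2
    rcases (hd p hp).lt_or_gt with hneg | hpos
    · rw [if_neg hneg.not_gt] at hτp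
      constructor <;> nlinarith [hmin p hp]
    · rw [if_pos hpos] at hτp
      constructor <;> nlinarith [hmin p hp]
  · have hτp₀ := (hτ p₀ hp₀).2
    split_ifs at hτp₀
    · exact Or.inr (by linarith)
    · exact Or.inl (by linarith)

section Rounding

variable {ι κ : Type*} [Fintype ι] [Fintype κ]

open scoped Classical in
noncomputable def fracSupport (A : ι → κ → ℝ) : Finset (ι × κ) :=
  {p | Int.fract (A p.1 p.2) ≠ 0}

lemma mem_fracSupport {A : ι → κ → ℝ} {p : ι × κ} :
    p ∈ fracSupport A ↔ Int.fract (A p.1 p.2) ≠ 0 := by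
  simp [fracSupport]

variable [DecidableEq ι] [DecidableEq κ]

lemma card_image_fst_add_card_image_snd_le_card_fracSupport {A : ι → κ → ℝ} {r : ι → ℤ}
    {c : κ → ℤ} (hr : ∀ i, ∑ j, A i j = r i) (hc : ∀ j, ∑ i, A i j = c j) :
    #((fracSupport A).image Prod.fst) + #((fracSupport A).image Prod.snd) ≤ #(fracSupport A) := by
  have hrow := two_mul_card_image_le_card (s := fracSupport A) (f := Prod.fst) fun p hp => by
    obtain ⟨j, hj, hfrac⟩ := exists_ne_fract_ne_zero_of_sum_eq_intCast (f := (A p.1 ·))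
      (hr p.1) (mem_fracSupport.mp hp)
    exact ⟨(p.1, j), mem_fracSupport.mpr hfrac, fun h => hj (congrArg Prod.snd h), rfl⟩
  have hcol := two_mul_card_image_le_card (s := fracSupport A) (f := Prod.snd) fun p hp => by
    obtain ⟨i, hi, hfrac⟩ := exists_ne_fract_ne_zero_of_sum_eq_intCast (f := (A · p.2))
      (hc p.2) (mem_fracSupport.mp hp)
    exact ⟨(i, p.2), mem_fracSupport.mpr hfrac, fun h => hi (congrArg Prod.fst h), rfl⟩
  omega

lemma exists_ne_zero_supported_margins_eq_zero {F : Finset (ι × κ)} (hF : F.Nonempty)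
    (hcard : #(F.image Prod.fst) + #(F.image Prod.snd) ≤ #F) :
    ∃ g : ι × κ → ℝ, g ≠ 0 ∧ (∀ p ∉ F, g p = 0) ∧
      (∀ i, ∑ j, g (i, j) = 0) ∧ (∀ j, ∑ i, g (i, j) = 0) := by
  obtain ⟨i₀, hi₀⟩ := hF.image Prod.fst
  set R := (F.image Prod.fst).erase i₀
  set C := F.image Prod.snd
  -- the row sum at `i₀` is left out: it is forced by the others, and this makes the count strict
  let T : (ι × κ → ℝ) →ₗ[ℝ] ((↥Fᶜ → ℝ) × (↥R → ℝ) × (↥C → ℝ)) :=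
    { toFun g := (fun p => g p, fun i => ∑ j, g (i, j), fun j => ∑ i, g (i, j))
      map_add' g h := by ext <;> simp [sum_add_distrib]
      map_smul' a g := by ext <;> simp [mul_sum] }
  have hdim : finrank ℝ ((↥Fᶜ → ℝ) × (↥R → ℝ) × (↥C → ℝ)) < finrank ℝ (ι × κ → ℝ) := by
    simp only [finrank_prod, finrank_fintype_fun_eq_card, Fintype.card_coe, R,
      card_erase_of_mem hi₀]
    have := F.card_compl_add_card
    have := card_pos.mpr ⟨i₀, hi₀⟩
    omega
  obtain ⟨g, hg, hg0⟩ := Submodule.exists_mem_ne_zero_of_ne_bot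
    (LinearMap.ker_ne_bot_of_finrank_lt (f := T) hdim)
  have hT : T g = 0 := hg
  have hsupp : ∀ p ∉ F, g p = 0 := fun p hp => congrFun (congrArg Prod.fst hT) ⟨p, mem_compl.mpr hp⟩
  have hrow : ∀ i ≠ i₀, ∑ j, g (i, j) = 0 := by
    intro i hi
    by_cases hiF : i ∈ F.image Prod.fst
    · exact congrFun (congrArg (fun x => x.2.1) hT) ⟨i, mem_erase.mpr ⟨hi, hiF⟩⟩
    · exact sum_eq_zero fun j _ => hsupp _ fun h => hiF (mem_image_of_mem Prod.fst h)
  have hcol : ∀ j, ∑ i, g (i, j) = 0 := by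
    intro j
    by_cases hjF : j ∈ C
    · exact congrFun (congrArg (fun x => x.2.2) hT) ⟨j, hjF⟩
    · exact sum_eq_zero fun i _ => hsupp _ fun h => hjF (mem_image_of_mem Prod.snd h)
  refine ⟨g, hg0, hsupp, fun i => ?_, hcol⟩
  obtain rfl | hi := eq_or_ne i i₀
  · calc ∑ j, g (i, j) = ∑ i, ∑ j, g (i, j) :=
          (sum_eq_single i (fun i' _ => hrow i') (by simp)).symm
      _ = 0 := by rw [sum_comm]; exact sum_eq_zero fun j _ => hcol j
  · exact hrow i hi

lemma exists_fracSupport_ssubset {A : ι → κ → ℝ} {lo hi : ι → κ → ℤ}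
    (hA : ∀ i j, A i j ∈ Set.Icc (lo i j : ℝ) (hi i j)) {r : ι → ℤ} {c : κ → ℤ}
    (hr : ∀ i, ∑ j, A i j = r i) (hc : ∀ j, ∑ i, A i j = c j) (hF : (fracSupport A).Nonempty) :
    ∃ A' : ι → κ → ℝ, (∀ i j, A' i j ∈ Set.Icc (lo i j : ℝ) (hi i j)) ∧
      (∀ i, ∑ j, A' i j = r i) ∧ (∀ j, ∑ i, A' i j = c j) ∧ fracSupport A' ⊂ fracSupport A := by
  obtain ⟨g, hg0, hgF, hgr, hgc⟩ := exists_ne_zero_supported_margins_eq_zero hF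
    (card_image_fst_add_card_image_snd_le_card_fracSupport hr hc)
  classical
  have hS : ({p | g p ≠ 0} : Finset (ι × κ)).Nonempty := by
    obtain ⟨p, hp⟩ := Function.ne_iff.mp hg0
    exact ⟨p, mem_filter.mpr ⟨mem_univ p, hp⟩⟩
  obtain ⟨t, ht, p, hp, hpend⟩ := exists_add_mul_mem_Icc_and_eq_endpoint hS
    (a := fun p => A p.1 p.2) (lo := fun p => lo p.1 p.2) (hi := fun p => hi p.1 p.2)
    (fun p _ => hA p.1 p.2) (fun p hp => (mem_filter.mp hp).2)
  have hgp : g p ≠ 0 := (mem_filter.mp hp).2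
  refine ⟨fun i j => A i j + t * g (i, j), fun i j => ?_, fun i => ?_, fun j => ?_, ?_⟩
  · by_cases hij : g (i, j) = 0
    · simpa [hij] using hA i j
    · exact ht (i, j) (mem_filter.mpr ⟨mem_univ _, hij⟩)
  · simp [sum_add_distrib, ← mul_sum, hgr, hr]
  · simp [sum_add_distrib, ← mul_sum, hgc, hc]
  refine LE.le.trans_ssubset (fun q hq => ?_) (erase_ssubset (not_imp_comm.mp (hgF p) hgp))
  have hq' := mem_fracSupport.mp hq
  refine mem_erase.mpr ⟨?_, ?_⟩
  · rintro rfl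
    rcases hpend with h | h <;> simp only [h, Int.fract_intCast] at hq' <;> exact hq' rfl
  · by_contra hqF
    simp only [hgF q hqF, mul_zero, add_zero] at hq'
    exact hqF (mem_fracSupport.mpr hq')

theorem exists_int_rounding {A : ι → κ → ℝ} {r : ι → ℤ} {c : κ → ℤ}
    (hr : ∀ i, ∑ j, A i j = r i) (hc : ∀ j, ∑ i, A i j = c j) :
    ∃ B : ι → κ → ℤ, (∀ i j, ⌊A i j⌋ ≤ B i j ∧ B i j ≤ ⌈A i j⌉) ∧
      (∀ i, ∑ j, B i j = r i) ∧ (∀ j, ∑ i, B i j = c j) := by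
  let P : Set (ι → κ → ℝ) := {A' | (∀ i j, A' i j ∈ Set.Icc (⌊A i j⌋ : ℝ) ⌈A i j⌉) ∧
    (∀ i, ∑ j, A' i j = r i) ∧ (∀ j, ∑ i, A' i j = c j)}
  have hAP : A ∈ P := ⟨fun i j => ⟨Int.floor_le _, Int.le_ceil _⟩, hr, hc⟩
  obtain ⟨A', ⟨hA'b, hA'r, hA'c⟩, hmin⟩ :=
    (measure fun A' => #(fracSupport A')).wf.has_min P ⟨A, hAP⟩
  have hA'int : ∀ i j, (⌊A' i j⌋ : ℝ) = A' i j := by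
    obtain hempty | hne := (fracSupport A').eq_empty_or_nonempty
    · intro i j
      have : (i, j) ∉ fracSupport A' := hempty ▸ notMem_empty _
      exact (Int.floor_eq_self_iff_mem _).mpr
        (Int.fract_eq_zero_iff.mp (by simpa [mem_fracSupport] using this))
    · obtain ⟨A'', hA''b, hA''r, hA''c, hlt⟩ := exists_fracSupport_ssubset hA'b hA'r hA'c hne
      exact absurd (card_lt_card hlt) (hmin A'' ⟨hA''b, hA''r, hA''c⟩)
  refine ⟨fun i j => ⌊A' i j⌋, fun i j => ⟨?_, ?_⟩, fun i => ?_, fun j => ?_⟩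
  · exact Int.le_floor.mpr (hA'b i j).1
  · exact_mod_cast (hA'int i j).trans_le (hA'b i j).2
  · exact_mod_cast (sum_congr rfl fun j _ => hA'int i j).trans (hA'r i)
  · exact_mod_cast (sum_congr rfl fun i _ => hA'int i j).trans (hA'c j)

end Rounding

theorem integer_balancing_by_rounding {n : ℕ} (W : Fin n → Fin n → ℝ)
    (u : Fin n → ℤ)
    (hnonneg : ∀ i j, 0 ≤ W i j)
    (hrow : ∀ i, ∑ j, W i j = (u i : ℝ))
    (hcol : ∀ i, ∑ k, W k i = (u i : ℝ)) :
    ∃ Wstar : Fin n → Fin n → ℕ,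
      (∀ i j, ((Wstar i j : ℤ) ≤ ⌈W i j⌉ ∧ ⌊W i j⌋ ≤ (Wstar i j : ℤ))) ∧
      (∀ i, ∑ j, (Wstar i j : ℝ) = (u i : ℝ)) ∧
      (∀ i, ∑ k, (Wstar k i : ℝ) = (u i : ℝ)) := by
  obtain ⟨B, hB, hBr, hBc⟩ := exists_int_rounding hrow hcol
  have hB₀ : ∀ i j, 0 ≤ B i j := fun i j => (Int.floor_nonneg.mpr (hnonneg i j)).trans (hB i j).1
  have hcast : ∀ i j, ((B i j).toNat : ℝ) = B i j := fun i j => by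
    rw [← Int.cast_natCast, Int.toNat_of_nonneg (hB₀ i j)]
  refine ⟨fun i j => (B i j).toNat, fun i j => ?_, fun i => ?_, fun i => ?_⟩
  · rw [Int.toNat_of_nonneg (hB₀ i j)]
    exact (hB i j).symm
  · simp only [hcast]
    exact_mod_cast hBr i
  · simp only [hcast]
    exact_mod_cast hBc i
end

section
/- Let u ∈ ℤ^n be nonnegative and suppose there exists W : Fin n → Fin n → ℝ≥0, supported on the edge set E of a digraph G, with Σ_j W_{ij} = Σ_k W_{ki} = u_i for all i (sums restricted to edges of G). Then there exists an integer-valued V : Fin n → Fin n → ℕ, also supported on E, with Σ_j V_{ij} = Σ_k V_{ki} = u_i for all i. -/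
/-!
Blow up row `i` into `r i` left vertices and column `j` into `c j` right vertices, joining
`(i, k)` to `(j, l)` when `x i j ≠ 0`. Hall's condition for this bipartite graph is a
double-counting inequality for `x`, and a perfect matching, read back as the number of
matched pairs between row `i` and column `j`, is the integer matrix.
-/

open scoped NNReal
open Finset

section

variable {α β : Type*} [Fintype α] [Fintype β]
  {K : Type*} [CommSemiring K] [PartialOrder K] [CanonicallyOrderedAdd K] [IsOrderedAddMonoid K]
  [CharZero K]

theorem sum_sum_le_sum_sum_of_support_subset {M : Type*} [AddCommMonoid M] [PartialOrder M]
    [CanonicallyOrderedAdd M] [IsOrderedAddMonoid M] (x : α → β → M) {R : Finset α}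
    {N : Finset β} (hN : ∀ i ∈ R, ∀ j ∉ N, x i j = 0) :
    ∑ i ∈ R, ∑ j, x i j ≤ ∑ j ∈ N, ∑ i, x i j :=
  calc ∑ i ∈ R, ∑ j, x i j = ∑ i ∈ R, ∑ j ∈ N, x i j :=
        sum_congr rfl fun i hi =>
          (sum_subset (subset_univ N) fun _ _ hj => hN i hi _ hj).symm
    _ = ∑ j ∈ N, ∑ i ∈ R, x i j := sum_comm
    _ ≤ ∑ j ∈ N, ∑ i, x i j := sum_le_sum fun _ _ => sum_le_sum_of_subset (subset_univ R)

theorem card_le_card_biUnion_blowup [DecidableEq β] [DecidableEq K] (x : α → β → K)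
    {r : α → ℕ} {c : β → ℕ}
    (hrow : ∀ i, ∑ j, x i j = r i) (hcol : ∀ j, ∑ i, x i j = c j)
    (s : Finset (Σ i, Fin (r i))) :
    #s ≤ #(s.biUnion fun a => {b : Σ j, Fin (c j) | x a.1 b.1 ≠ 0}) := by
  classical
  set R := s.image Sigma.fst
  set N : Finset β := {j | ∃ i ∈ R, x i j ≠ 0}
  have hRN : ∑ i ∈ R, r i ≤ ∑ j ∈ N, c j := by
    have h := sum_sum_le_sum_sum_of_support_subset x (R := R) (N := N) fun i hi j hj => by
      by_contra hij
      exact hj (mem_filter.2 ⟨mem_univ j, i, hi, hij⟩)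
    simp only [hrow, hcol] at h
    exact_mod_cast h
  calc #s ≤ #(R.sigma fun i => (univ : Finset (Fin (r i)))) :=
        card_le_card fun a ha => mem_sigma.2 ⟨mem_image_of_mem _ ha, mem_univ _⟩
    _ = ∑ i ∈ R, r i := by simp [card_sigma]
    _ ≤ ∑ j ∈ N, c j := hRN
    _ = #(N.sigma fun j => (univ : Finset (Fin (c j)))) := by simp [card_sigma]
    _ ≤ _ := card_le_card fun b hb => by
        obtain ⟨i, hi, hij⟩ := (mem_filter.1 (mem_sigma.1 hb).1).2
        obtain ⟨a, ha, rfl⟩ := mem_image.1 hi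
        exact mem_biUnion.2 ⟨a, ha, mem_filter.2 ⟨mem_univ b, hij⟩⟩

theorem exists_nat_matrix_of_bijective {r : α → ℕ} {c : β → ℕ} {S : α → β → Prop}
    (f : (Σ i, Fin (r i)) → Σ j, Fin (c j)) (hf : f.Bijective) (hS : ∀ a, S a.1 (f a).1) :
    ∃ y : α → β → ℕ, (∀ i j, ¬ S i j → y i j = 0) ∧
      (∀ i, ∑ j, y i j = r i) ∧ ∀ j, ∑ i, y i j = c j := by
  classical
  refine ⟨fun i j => ∑ k, if (f ⟨i, k⟩).1 = j then 1 else 0, ?_, ?_, ?_⟩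
  · intro i j hij
    refine sum_eq_zero fun k _ => if_neg fun (h : (f ⟨i, k⟩).1 = j) => hij (h ▸ hS ⟨i, k⟩)
  · intro i
    rw [sum_comm]
    simp
  · intro j
    rw [← Fintype.sum_sigma' (fun i k => if (f ⟨i, k⟩).1 = j then 1 else 0),
      hf.sum_comp (fun b => if b.1 = j then 1 else 0), Fintype.sum_sigma,
      Fintype.sum_eq_single j fun j' hj' => by simp [hj']]
    simp

theorem exists_nat_matrix_of_row_col_sums (x : α → β → K) {r : α → ℕ} {c : β → ℕ}
    (hrow : ∀ i, ∑ j, x i j = r i) (hcol : ∀ j, ∑ i, x i j = c j) :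
    ∃ y : α → β → ℕ, (∀ i j, x i j = 0 → y i j = 0) ∧
      (∀ i, ∑ j, y i j = r i) ∧ ∀ j, ∑ i, y i j = c j := by
  classical
  obtain ⟨f, hf_inj, hf⟩ := (all_card_le_biUnion_card_iff_exists_injective _).1
    (card_le_card_biUnion_blowup x hrow hcol)
  have htotal : ∑ i, r i = ∑ j, c j := by
    have h : ∑ i, ∑ j, x i j = ∑ j, ∑ i, x i j := sum_comm
    simp only [hrow, hcol] at h
    exact_mod_cast h
  have hf_bij : f.Bijective :=
    (Fintype.bijective_iff_injective_and_card f).2 ⟨hf_inj, by simp [htotal]⟩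
  obtain ⟨y, hy, hyrow, hycol⟩ := exists_nat_matrix_of_bijective (S := fun i j => x i j ≠ 0)
    f hf_bij fun a => (mem_filter.1 (hf a)).2
  exact ⟨y, fun i j hx => hy i j (not_not.2 hx), hyrow, hycol⟩

end

theorem integer_feasibility {n : ℕ} (E : Fin n → Fin n → Prop)
    (u : Fin n → ℕ)
    (W : Fin n → Fin n → ℝ≥0)
    (hsupp : ∀ i j, ¬ E i j → W i j = 0)
    (hrow : ∀ i, ∑ j, W i j = (u i : ℝ≥0))
    (hcol : ∀ i, ∑ k, W k i = (u i : ℝ≥0)) :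
    ∃ V : Fin n → Fin n → ℕ,
      (∀ i j, ¬ E i j → V i j = 0) ∧
      (∀ i, ∑ j, V i j = u i) ∧
      (∀ i, ∑ k, V k i = u i) := by
  obtain ⟨V, hV, hVrow, hVcol⟩ := exists_nat_matrix_of_row_col_sums W hrow hcol
  exact ⟨V, fun i j hE => hV i j (hsupp i j hE), hVrow, hVcol⟩
end

section
/- Let W : Fin n → Fin n → ℝ≥0 be balanced with integer vertex weights, let C be a completely decimal cycle given by pairwise-distinct α_1,...,α_p and pairwise-distinct β_1,...,β_p (all W_{α_k,β_k} and W_{α_{k+1},β_k} non-integer, α_{p+1}=α_1), and let ε be the minimum over k of the fractional parts W_{α_k,β_k} − ⌊W_{α_k,β_k}⌋. After the update W'_{α_k,β_k} = W_{α_k,β_k} − ε, W'_{α_{k+1},β_k} = W_{α_{k+1},β_k} + ε (other entries unchanged), the number of non-integer entries of W' is strictly smaller than the number of non-integer entries of W. -/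
open scoped Classical

/-- A real number is an integer. -/
def IsIntR (x : ℝ) : Prop := ∃ m : ℤ, x = (m : ℝ)

theorem cycle_update_decreases_decimal_count {n p : ℕ} (W W' : Fin n → Fin n → ℝ)
    (hnonneg : ∀ i j, 0 ≤ W i j)
    (hbal : ∀ i, ∑ j, W i j = ∑ k, W k i)
    (hint : ∀ i, IsIntR (∑ j, W i j))
    (α β : Fin (p + 1) → Fin n)
    (hα : Function.Injective α) (hβ : Function.Injective β)
    (hcyc : ∀ k, ¬ IsIntR (W (α k) (β k)) ∧ ¬ IsIntR (W (α (k + 1)) (β k)))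
    (ε : ℝ)
    (hεle : ∀ k, ε ≤ Int.fract (W (α k) (β k)))
    (hεmem : ∃ k, ε = Int.fract (W (α k) (β k)))
    (hfwd : ∀ k, W' (α k) (β k) = W (α k) (β k) - ε)
    (hbwd : ∀ k, W' (α (k + 1)) (β k) = W (α (k + 1)) (β k) + ε)
    (hoff : ∀ i j,
      (∀ k, ¬ (i = α k ∧ j = β k)) → (∀ k, ¬ (i = α (k + 1) ∧ j = β k)) →
      W' i j = W i j) :
    (Finset.univ.filter fun q : Fin n × Fin n => ¬ IsIntR (W' q.1 q.2)).card <
    (Finset.univ.filter fun q : Fin n × Fin n => ¬ IsIntR (W q.1 q.2)).card := by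
  -- Subset: every non-integer entry of W' was a non-integer entry of W.
  have hsub : (Finset.univ.filter fun q : Fin n × Fin n => ¬ IsIntR (W' q.1 q.2)) ⊆
      (Finset.univ.filter fun q : Fin n × Fin n => ¬ IsIntR (W q.1 q.2)) := by
    intro q hq
    simp only [Finset.mem_filter, Finset.mem_univ, true_and] at hq ⊢
    by_contra hW
    -- q is not a forward edge nor a backward edge, since those W-entries are non-integer
    have h1 : ∀ k, ¬ (q.1 = α k ∧ q.2 = β k) := by
      rintro k ⟨h1, h2⟩
      exact (hcyc k).1 (h1 ▸ h2 ▸ hW)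
    have h2 : ∀ k, ¬ (q.1 = α (k + 1) ∧ q.2 = β k) := by
      rintro k ⟨h1, h2⟩
      exact (hcyc k).2 (h1 ▸ h2 ▸ hW)
    exact hq (hoff q.1 q.2 h1 h2 ▸ hW)
  -- Strictness: the minimizing forward entry becomes an integer.
  obtain ⟨k0, hk0⟩ := hεmem
  refine Finset.card_lt_card ((Finset.ssubset_iff_of_subset hsub).mpr
    ⟨(α k0, β k0), ?_, ?_⟩)
  · simp only [Finset.mem_filter, Finset.mem_univ, true_and]
    exact (hcyc k0).1
  · simp only [Finset.mem_filter, Finset.mem_univ, true_and, not_not]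
    refine ⟨⌊W (α k0) (β k0)⌋, ?_⟩
    rw [hfwd k0, hk0, Int.fract]
    ring
end

section
/- Let W : Fin n → Fin n → ℝ≥0 with W balanced (row sum i = column sum i = u_i ∈ ℤ for all i), and additionally suppose every entry of W is rational. Then there exists W* : Fin n → Fin n → ℕ with W*_{ij} = 0 whenever W_{ij} = 0 and with all row and column sums of W* equal to those of W. -/
/-!
Split every vertex `i` into `u i` copies and spread the weight `W i j` evenly over the
`u i * u j` pairs of copies. Since all row and column sums of `W` at `i` equal `u i`, the result
is a doubly stochastic matrix, so by Hall's theorem its support contains a permutation. Counting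
how many copies of `i` this permutation sends to copies of `j` gives the integer weighting.
-/

open Finset Matrix
open scoped NNReal

section Hall

variable {R n : Type*} [Fintype n] [DecidableEq n]
  [Semifield R] [LinearOrder R] [IsStrictOrderedRing R] {M : Matrix n n R}

theorem card_le_card_of_mem_doublyStochastic (hM : M ∈ doublyStochastic R n) {A S : Finset n}
    (hAS : ∀ i ∈ A, ∀ j ∉ S, M i j = 0) : #A ≤ #S := by
  have hrow : ∀ i ∈ A, ∑ j ∈ S, M i j = 1 := fun i hi => by
    rw [← sum_row_of_mem_doublyStochastic hM i]
    exact sum_subset (subset_univ _) fun j _ hj => hAS i hi j hj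
  have : (#A : R) ≤ #S := calc
    (#A : R) = ∑ i ∈ A, ∑ j ∈ S, M i j := by simp [sum_congr rfl hrow]
    _ ≤ ∑ i, ∑ j ∈ S, M i j := sum_le_sum_of_subset_of_nonneg (subset_univ _)
      fun i _ _ => sum_nonneg fun j _ => nonneg_of_mem_doublyStochastic hM
    _ = ∑ j ∈ S, ∑ i, M i j := sum_comm
    _ = #S := by simp [sum_col_of_mem_doublyStochastic hM]
  exact_mod_cast this

theorem exists_perm_forall_ne_zero_of_mem_doublyStochastic (hM : M ∈ doublyStochastic R n) :
    ∃ σ : Equiv.Perm n, ∀ i, M i (σ i) ≠ 0 := by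
  obtain ⟨f, hf, hfM⟩ :=
    (all_card_le_biUnion_card_iff_exists_injective fun i => ({j | M i j ≠ 0} : Finset n)).1
      fun A => card_le_card_of_mem_doublyStochastic hM fun i hi j hj => by
        by_contra h
        exact hj (mem_biUnion.2 ⟨i, hi, by simpa using h⟩)
  exact ⟨Equiv.ofBijective f hf.bijective_of_finite, fun i => by simpa using hfM i⟩

end Hall

section Blowup

variable {R ι : Type*} [Semifield R] {W : Matrix ι ι R} {u : ι → ℕ}

def blowup (W : Matrix ι ι R) (u : ι → ℕ) : Matrix (Σ i, Fin (u i)) (Σ i, Fin (u i)) R :=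
  fun x y => W x.1 y.1 / (u x.1 * u y.1)

theorem blowup_transpose : blowup Wᵀ u = (blowup W u)ᵀ := by
  ext x y
  simp [blowup, mul_comm]

variable [Fintype ι] [LinearOrder R] [IsStrictOrderedRing R]

theorem sum_blowup_row (hW : ∀ i j, 0 ≤ W i j) (hrow : ∀ i, ∑ j, W i j = u i)
    (hcol : ∀ j, ∑ i, W i j = u j) (x : Σ i, Fin (u i)) : ∑ y, blowup W u x y = 1 := by
  have hx : (u x.1 : R) ≠ 0 := by exact_mod_cast x.2.pos.ne'
  have hcopies : ∀ j, (u j : R) * (W x.1 j / (u x.1 * u j)) = W x.1 j / u x.1 := fun j => by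
    -- a vertex without copies carries no weight, so the junk value of `/ 0` does no harm
    rcases eq_or_ne (u j) 0 with hj | hj
    · have hcol0 : W x.1 j = 0 := (sum_eq_zero_iff_of_nonneg fun i _ => hW i j).1
        (by simp [hcol j, hj]) x.1 (mem_univ _)
      simp [hcol0]
    · field_simp
  calc ∑ y, blowup W u x y = ∑ j, (u j : R) * (W x.1 j / (u x.1 * u j)) := by
        simp [Fintype.sum_sigma, blowup]
    _ = 1 := by simp only [hcopies, ← sum_div, hrow, div_self hx]

theorem blowup_mem_doublyStochastic [DecidableEq ι] (hW : ∀ i j, 0 ≤ W i j)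
    (hrow : ∀ i, ∑ j, W i j = u i) (hcol : ∀ j, ∑ i, W i j = u j) :
    blowup W u ∈ doublyStochastic R (Σ i, Fin (u i)) := by
  refine mem_doublyStochastic_iff_sum.2
    ⟨fun x y => div_nonneg (hW _ _) (by positivity), sum_blowup_row hW hrow hcol, fun y => ?_⟩
  simpa only [blowup_transpose, transpose_apply] using
    sum_blowup_row (W := Wᵀ) (fun i j => hW j i) hcol hrow y

end Blowup

section BlockCount

variable {α ι : Type*} [Fintype α] [DecidableEq ι]

def blockCount (p : α → ι) (σ : Equiv.Perm α) (i j : ι) : ℕ :=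
  #{x | p x = i ∧ p (σ x) = j}

theorem blockCount_inv (p : α → ι) (σ : Equiv.Perm α) (i j : ι) :
    blockCount p σ⁻¹ j i = blockCount p σ i j :=
  card_nbij' (fun y => σ⁻¹ y) (fun x => σ x) (fun _ _ => by simp_all) (fun _ _ => by simp_all)
    (fun y _ => by simp) (fun x _ => by simp)

variable [Fintype ι]

theorem sum_blockCount_right (p : α → ι) (σ : Equiv.Perm α) (i : ι) :
    ∑ j, blockCount p σ i j = #{x | p x = i} := by
  rw [card_eq_sum_card_fiberwise (f := p ∘ σ) (t := univ) fun _ _ => mem_coe.2 (mem_univ _)]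
  simp [blockCount, filter_filter]

theorem sum_blockCount_left (p : α → ι) (σ : Equiv.Perm α) (j : ι) :
    ∑ i, blockCount p σ i j = #{x | p x = j} := by
  simpa only [blockCount_inv] using sum_blockCount_right p σ⁻¹ j

end BlockCount

theorem card_filter_sigma_fst_eq {ι : Type*} [Fintype ι] [DecidableEq ι] (u : ι → ℕ) (i : ι) :
    #{x : Σ i, Fin (u i) | x.1 = i} = u i := by
  rw [card_filter, Fintype.sum_sigma,
    sum_eq_single_of_mem i (mem_univ i) fun j _ hj => by simp [hj]]
  simp

theorem rational_integer_balancing_general {n : ℕ} (W : Fin n → Fin n → ℝ≥0)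
    (u : Fin n → ℕ)
    (hbal : ∀ i, ∑ j, W i j = ∑ k, W k i)
    (hint : ∀ i, ∑ j, W i j = (u i : ℝ≥0)) :
    ∃ Wstar : Fin n → Fin n → ℕ,
      (∀ i j, W i j = 0 → Wstar i j = 0) ∧
      (∀ i, ∑ j, (Wstar i j : ℝ≥0) = ∑ j, W i j) ∧
      (∀ i, ∑ k, (Wstar k i : ℝ≥0) = ∑ k, W k i) := by
  have hcol : ∀ i, ∑ k, W k i = u i := fun i => (hbal i).symm.trans (hint i)
  obtain ⟨σ, hσ⟩ := exists_perm_forall_ne_zero_of_mem_doublyStochastic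
    (blowup_mem_doublyStochastic (fun _ _ => zero_le) hint hcol)
  refine ⟨blockCount Sigma.fst σ, fun i j hW => ?_, fun i => ?_, fun j => ?_⟩
  · refine card_eq_zero.2 (filter_eq_empty_iff.2 fun x _ hx => hσ x ?_)
    simp [blowup, hx.1, hx.2, hW]
  · rw [hint, ← Nat.cast_sum, sum_blockCount_right, card_filter_sigma_fst_eq]
  · rw [hcol, ← Nat.cast_sum, sum_blockCount_left, card_filter_sigma_fst_eq]

theorem rational_integer_balancing {n : ℕ} (W : Fin n → Fin n → ℝ≥0)
    (u : Fin n → ℕ)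
    (hbal : ∀ i, ∑ j, W i j = ∑ k, W k i)
    (hint : ∀ i, ∑ j, W i j = (u i : ℝ≥0))
    (hrat : ∀ i j, ∃ q : ℚ, (W i j : ℝ) = (q : ℝ)) :
    ∃ Wstar : Fin n → Fin n → ℕ,
      (∀ i j, W i j = 0 → Wstar i j = 0) ∧
      (∀ i, ∑ j, (Wstar i j : ℝ≥0) = ∑ j, W i j) ∧
      (∀ i, ∑ k, (Wstar k i : ℝ≥0) = ∑ k, W k i) :=
  rational_integer_balancing_general W u hbal hint
end
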